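/- Let σ : ℝ → ℝ be analytic with σ = U₀(ξ) and ξᵢ' = Uᵢ(ξ) for analytic ξ = (ξ₁,…,ξ_N) and polynomials Uᵢ (i = 0,…,N). Then the ℝ-algebra generated by {σ^{(r)} : r ∈ ℕ} inside the ring of analytic functions has transcendence degree at most N over ℝ. -/

import Mathlib

open MvPolynomial

lemma not_algIndep_succ (N : ℕ) (y : Fin (N + 1) → MvPolynomial (Fin N) ℝ) :
    ¬ AlgebraicIndependent ℝ y := by
  intro h
  set D := (Finset.univ.sup fun i => (y i).totalDegree) + 1 with hD
  have hyD : ∀ i, (y i).totalDegree ≤ D := by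
    intro i
    have h1 : (y i).totalDegree ≤ Finset.univ.sup fun j => (y j).totalDegree :=
      Finset.le_sup (f := fun j => (y j).totalDegree) (Finset.mem_univ i)
    omega
  set C := (N + 1) * D + 1 with hC
  set t := C ^ N with ht
  set m := (N + 1) * (t * D) with hm
  -- the exponent map
  set β : (Fin (N + 1) → Fin (t + 1)) → (Fin (N + 1) →₀ ℕ) :=
    fun α => Finsupp.equivFunOnFinite.symm fun i => (α i : ℕ) with hβ
  have hβapp : ∀ α i, β α i = (α i : ℕ) := fun α i => rfl
  have hβinj : Function.Injective β := by
    intro a b hab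
    funext i
    exact Fin.val_injective (by rw [← hβapp a i, ← hβapp b i, hab])
  -- the products of powers of y
  set v : (Fin (N + 1) → Fin (t + 1)) → MvPolynomial (Fin N) ℝ :=
    fun α => ∏ i, y i ^ (α i : ℕ) with hv
  have hveq : ∀ α, v α = aeval y (monomial (β α) (1 : ℝ)) := by
    intro α
    rw [aeval_monomial, map_one, one_mul,
      Finsupp.prod_fintype _ _ (fun i => pow_zero (y i))]
    rfl
  have hli : LinearIndependent ℝ v := by
    have h1 : LinearIndependent ℝ fun α => (monomial (β α) (1 : ℝ)) := by
      have := ((basisMonomials (Fin (N + 1)) ℝ).linearIndependent).comp β hβinj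
      simpa [coe_basisMonomials, Function.comp_def] using this
    have hinj : Function.Injective (aeval (R := ℝ) y) :=
      algebraicIndependent_iff_injective_aeval.1 h
    have h2 := h1.map' (aeval y).toLinearMap
      (LinearMap.ker_eq_bot.2 (by simpa using hinj))
    have : v = (aeval y).toLinearMap ∘ fun α => (monomial (β α) (1 : ℝ)) := by
      funext α; simpa using hveq α
    rwa [← this] at h2
  have hdeg : ∀ α, (v α).totalDegree ≤ m := by
    intro α
    calc (v α).totalDegree ≤ ∑ i, (y i ^ (α i : ℕ)).totalDegree :=
          totalDegree_finset_prod _ _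
      _ ≤ ∑ _i : Fin (N + 1), t * D := by
          apply Finset.sum_le_sum
          intro i _
          calc (y i ^ (α i : ℕ)).totalDegree ≤ (α i : ℕ) * (y i).totalDegree :=
                totalDegree_pow _ _
            _ ≤ t * D := Nat.mul_le_mul (Nat.lt_succ_iff.1 (α i).isLt) (hyD i)
      _ = m := by simp [hm, Finset.sum_const, mul_comm, mul_assoc]
  -- span set of monomials of degree ≤ m
  set S : Finset (MvPolynomial (Fin N) ℝ) :=
    Finset.image
      (fun f : Fin N → Fin (m + 1) =>
        monomial (Finsupp.equivFunOnFinite.symm fun i => (f i : ℕ)) (1 : ℝ))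
      Finset.univ with hS
  have hScard : S.card ≤ (m + 1) ^ N := by
    refine le_trans Finset.card_image_le ?_
    simp [Finset.card_univ]
  have hmem : ∀ α, v α ∈ Submodule.span ℝ (S : Set (MvPolynomial (Fin N) ℝ)) := by
    intro α
    have hd := hdeg α
    rw [(v α).as_sum]
    refine Submodule.sum_mem _ fun b hb => ?_
    have hb' : ∀ i, b i ≤ m := by
      intro i
      refine le_trans ?_ (le_trans (le_totalDegree hb) hd)
      by_cases hbi : i ∈ b.support
      · exact Finset.single_le_sum (f := fun j => b j) (fun _ _ => Nat.zero_le _) hbi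
      · simp [Finsupp.notMem_support_iff.1 hbi]
    have hSmem : monomial b (1 : ℝ) ∈ S := by
      rw [hS, Finset.mem_image]
      refine ⟨fun i => ⟨b i, Nat.lt_succ_of_le (hb' i)⟩, Finset.mem_univ _, ?_⟩
      have hbb : (Finsupp.equivFunOnFinite.symm
          fun i => ((⟨b i, Nat.lt_succ_of_le (hb' i)⟩ : Fin (m + 1)) : ℕ)) = b :=
        Finsupp.equivFunOnFinite_symm_coe b
      rw [hbb]
    have : monomial b (coeff b (v α)) = (coeff b (v α)) • monomial b (1 : ℝ) := by
      rw [smul_monomial, smul_eq_mul, mul_one]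
    rw [this]
    exact Submodule.smul_mem _ _ (Submodule.subset_span hSmem)
  -- cardinality bound
  set M := Submodule.span ℝ (S : Set (MvPolynomial (Fin N) ℝ)) with hM
  haveI : Module.Finite ℝ M := FiniteDimensional.span_of_finite ℝ S.finite_toSet
  set v' : (Fin (N + 1) → Fin (t + 1)) → M := fun α => ⟨v α, hmem α⟩ with hv'
  have hli' : LinearIndependent ℝ v' := by
    apply LinearIndependent.of_comp M.subtype
    convert hli
    rfl
  have hcard := hli'.fintype_card_le_finrank
  have hfr : Module.finrank ℝ M ≤ S.card := finrank_span_finset_le_card S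
  have hcount : (t + 1) ^ (N + 1) ≤ (m + 1) ^ N := by
    calc (t + 1) ^ (N + 1) = Fintype.card (Fin (N + 1) → Fin (t + 1)) := by
          simp [Finset.card_univ]
      _ ≤ Module.finrank ℝ M := hcard
      _ ≤ S.card := hfr
      _ ≤ (m + 1) ^ N := hScard
  -- numeric contradiction
  have ht1 : 1 ≤ t := Nat.one_le_pow _ _ (by omega)
  have h1 : m + 1 ≤ C * t := by
    calc m + 1 = (N + 1) * D * t + 1 := by rw [hm]; ring
      _ ≤ (N + 1) * D * t + t := by omega
      _ = C * t := by rw [hC]; ring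
  have h2 : (m + 1) ^ N ≤ t ^ (N + 1) := by
    calc (m + 1) ^ N ≤ (C * t) ^ N := Nat.pow_le_pow_left h1 N
      _ = C ^ N * t ^ N := mul_pow _ _ _
      _ = t ^ (N + 1) := by rw [← ht, pow_succ, mul_comm]
  have h3 : t ^ (N + 1) < (t + 1) ^ (N + 1) :=
    Nat.pow_lt_pow_left (by omega) (Nat.succ_ne_zero N)
  omega


open MvPolynomial

lemma hasDerivAt_eval_comp (N : ℕ) (ξ : Fin N → ℝ → ℝ) (U : Fin N → MvPolynomial (Fin N) ℝ)
    (hξ : ∀ i, ∀ x : ℝ, AnalyticAt ℝ (ξ i) x)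
    (hξU : ∀ i, ∀ x : ℝ, deriv (ξ i) x = MvPolynomial.eval (fun j => ξ j x) (U i))
    (p : MvPolynomial (Fin N) ℝ) (x : ℝ) :
    HasDerivAt (fun x => eval (fun i => ξ i x) p)
      (eval (fun i => ξ i x) (∑ i, pderiv i p * U i)) x := by
  induction p using MvPolynomial.induction_on with
  | C a =>
    simp only [eval_C, pderiv_C, zero_mul, Finset.sum_const_zero, eval_zero]
    exact hasDerivAt_const x a
  | add p q hp hq =>
    have hsum : (∑ i, pderiv i (p + q) * U i)
        = (∑ i, pderiv i p * U i) + (∑ i, pderiv i q * U i) := by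
      rw [← Finset.sum_add_distrib]
      exact Finset.sum_congr rfl fun i _ => by rw [map_add, add_mul]
    simp only [eval_add, hsum]
    exact hp.add hq
  | mul_X p n hp =>
    have hkey : (∑ i, pderiv i (p * X n) * U i)
        = (∑ i, pderiv i p * U i) * X n + p * U n := by
      have hterm : ∀ i : Fin N, pderiv i (p * X n) * U i
          = pderiv i p * U i * X n + p * pderiv i (X n) * U i := by
        intro i
        rw [pderiv_mul]
        ring
      rw [Finset.sum_congr rfl fun i _ => hterm i, Finset.sum_add_distrib, ← Finset.sum_mul]
      congr 1
      rw [Finset.sum_eq_single n]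
      · rw [pderiv_X_self, mul_one]
      · intro i _ hin
        rw [pderiv_X, Pi.single_eq_of_ne (Ne.symm hin)]
        ring
      · intro hn
        exact absurd (Finset.mem_univ n) hn
    have hξn : HasDerivAt (ξ n) (eval (fun j => ξ j x) (U n)) x := by
      have := (hξ n x).differentiableAt.hasDerivAt
      rwa [hξU n x] at this
    simp only [eval_add, eval_mul, eval_X, hkey]
    exact hp.mul hξn

/-- The algebra generated by the derivatives of `σ` has transcendence degree at most `N`:
any `N + 1` elements of it are algebraically dependent over `ℝ`. -/
theorem trdeg_le_of_A1 (N : ℕ) (σ : ℝ → ℝ) (ξ : Fin N → ℝ → ℝ)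
    (U0 : MvPolynomial (Fin N) ℝ) (U : Fin N → MvPolynomial (Fin N) ℝ)
    (hσ : ∀ x : ℝ, AnalyticAt ℝ σ x)
    (hξ : ∀ i, ∀ x : ℝ, AnalyticAt ℝ (ξ i) x)
    (hσU : ∀ x : ℝ, σ x = MvPolynomial.eval (fun i => ξ i x) U0)
    (hξU : ∀ i, ∀ x : ℝ, deriv (ξ i) x = MvPolynomial.eval (fun j => ξ j x) (U i)) :
    ∀ g : Fin (N + 1) → (ℝ → ℝ),
      (∀ k, g k ∈ Algebra.adjoin ℝ (Set.range fun r : ℕ => iteratedDeriv r σ)) →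
      ¬ AlgebraicIndependent ℝ g := by
  intro g hg hind
  -- pointwise evaluation of `aeval ξ`
  have haeval : ∀ (p : MvPolynomial (Fin N) ℝ) (x : ℝ),
      (aeval ξ p : ℝ → ℝ) x = eval (fun i => ξ i x) p := by
    intro p x
    induction p using MvPolynomial.induction_on with
    | C a => simp [Pi.algebraMap_apply]
    | add p q hp hq => simp [map_add, hp, hq]
    | mul_X p n hp => simp [map_mul, hp]
  -- each iterated derivative of σ is a polynomial in ξ
  have hporig : ∀ r : ℕ, ∃ p : MvPolynomial (Fin N) ℝ,
      iteratedDeriv r σ = fun x => eval (fun i => ξ i x) p := by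
    intro r
    induction r with
    | zero => exact ⟨U0, by funext x; simpa using hσU x⟩
    | succ r ih =>
      obtain ⟨p, hp⟩ := ih
      refine ⟨∑ i, pderiv i p * U i, ?_⟩
      funext x
      rw [iteratedDeriv_succ, hp]
      exact (hasDerivAt_eval_comp N ξ U hξ hξU p x).deriv
  have hsub : Algebra.adjoin ℝ (Set.range fun r : ℕ => iteratedDeriv r σ)
      ≤ (aeval (R := ℝ) ξ).range := by
    apply Algebra.adjoin_le
    rintro _ ⟨r, rfl⟩
    obtain ⟨p, hp⟩ := hporig r
    exact ⟨p, show (aeval ξ) p = iteratedDeriv r σ from by funext x; rw [haeval p x, hp]⟩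
  choose p hp using fun k => (AlgHom.mem_range _).1 (hsub (hg k))
  have hcomp : g = (aeval (R := ℝ) ξ) ∘ p := by funext k; exact (hp k).symm
  have hindep : AlgebraicIndependent ℝ p :=
    AlgebraicIndependent.of_comp (aeval ξ) (hcomp ▸ hind)
  exact not_algIndep_succ N p hindep
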